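/- Cyclic order version of the splitting proximal point algorithm: let (H,d) be a locally compact Hadamard space, f₁,…,f_N : H → (−∞,∞] proper convex lower semicontinuous functions, and f = Σₙ fₙ with a nonempty set of minimizers. Let (λ_k)_{k∈ℕ₀} be positive reals with Σ_k λ_k = ∞ and Σ_k λ_k² < ∞. Let x₀ ∈ H and for each k ∈ ℕ₀ and n = 1,…,N let x_{kN+n} be a minimizer of z ↦ fₙ(z) + (1/(2λ_k))·d(x_{kN+n−1},z)². Assume there exists L > 0 such that fₙ(x_{kN}) − fₙ(x_{kN+n}) ≤ L·d(x_{kN},x_{kN+n}) and fₙ(x_{kN+n−1}) − fₙ(x_{kN+n}) ≤ L·d(x_{kN+n−1},x_{kN+n}) for every k ∈ ℕ₀ and n = 1,…,N. Then the sequence (x_j)_{j∈ℕ₀} converges to a minimizer of f. -/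

import Mathlib

open Filter Topology

/-- A Hadamard space structure on a metric space `H`: a geodesic combination map
`geo x y t = (1-t)x ⊕ ty` satisfying the geodesic axioms and the CAT(0) inequality.
(Completeness is imposed via the `CompleteSpace` instance in the theorems.) -/
structure Hadamard (H : Type*) [MetricSpace H] : Type _ where
  geo : H → H → ℝ → H
  geo_zero : ∀ x y : H, geo x y 0 = x
  geo_one : ∀ x y : H, geo x y 1 = y
  geo_dist : ∀ x y : H, ∀ s ∈ Set.Icc (0 : ℝ) 1, ∀ t ∈ Set.Icc (0 : ℝ) 1,
    dist (geo x y s) (geo x y t) = |s - t| * dist x y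
  cat0 : ∀ z x y : H, ∀ t ∈ Set.Icc (0 : ℝ) 1,
    dist z (geo x y t) ^ 2
      ≤ (1 - t) * dist z x ^ 2 + t * dist z y ^ 2 - t * (1 - t) * dist x y ^ 2

/-- A function `f : H → (-∞,∞]` is (geodesically) convex if along every geodesic
`t ↦ (1-t)x ⊕ ty` it satisfies the convexity inequality. -/
def GeoConvex {H : Type*} [MetricSpace H] (G : Hadamard H) (f : H → EReal) : Prop :=
  ∀ x y : H, ∀ t ∈ Set.Icc (0 : ℝ) 1,
    f (G.geo x y t) ≤ ((1 - t : ℝ) : EReal) * f x + ((t : ℝ) : EReal) * f y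

/-!
Each resolvent step satisfies the variational inequality
`2λ (fₙ xₙ - fₙ y) + d(xₙ₋₁, xₙ)² + d(xₙ, y)² ≤ d(xₙ₋₁, y)²` (the CAT(0) inequality along the
geodesic from `xₙ` to `y`), and the growth bounds keep every step within `2Lλₖ`. Summing over a
cycle gives the quasi-Fejér inequality
`d(x_{(k+1)N}, y)² + 2λₖ (f x_{kN} - f y) ≤ d(x_{kN}, y)² + 4L²N²λₖ²` for every `y` with
`f y < ∞`. So `d(x_{kN}, y)²` converges for a minimizer `y` and `∑ λₖ (f x_{kN} - min f) < ∞`;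
since `∑ λₖ = ∞`, `f x_{kN} → min f` along a subsequence, which is bounded and (the space being
proper by Hopf–Rinow) has a limit point `z`, a minimizer by lower semicontinuity. Fejér
monotonicity with respect to `z` then gives `x_{kN} → z`, and the intermediate iterates stay
within `2LNλₖ → 0` of `x_{kN}`.
-/

theorem Metric.totallyBounded_of_forall_subset_thickening {X : Type*} [PseudoMetricSpace X]
    {s : Set X} (h : ∀ ε > 0, ∃ K, TotallyBounded K ∧ s ⊆ Metric.thickening ε K) :
    TotallyBounded s := by
  refine Metric.totallyBounded_iff.2 fun ε hε => ?_
  obtain ⟨K, hK, hsK⟩ := h (ε / 2) (half_pos hε)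
  obtain ⟨t, ht, hKt⟩ := Metric.totallyBounded_iff.1 hK (ε / 2) (half_pos hε)
  refine ⟨t, ht, fun x hx => ?_⟩
  obtain ⟨y, hyK, hxy⟩ := Metric.mem_thickening_iff.1 (hsK hx)
  obtain ⟨c, hct, hyc⟩ := Set.mem_iUnion₂.1 (hKt hyK)
  refine Set.mem_iUnion₂.2 ⟨c, hct, ?_⟩
  rw [Metric.mem_ball] at hyc ⊢
  linarith [dist_triangle x y c]

namespace Hadamard

variable {H : Type*} [MetricSpace H]

theorem dist_geo_left (G : Hadamard H) (x y : H) {t : ℝ} (ht : t ∈ Set.Icc (0 : ℝ) 1) :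
    dist x (G.geo x y t) = t * dist x y := by
  have h := G.geo_dist x y 0 ⟨le_rfl, zero_le_one⟩ t ht
  rwa [G.geo_zero, zero_sub, abs_neg, abs_of_nonneg ht.1] at h

theorem dist_geo_right (G : Hadamard H) (x y : H) {t : ℝ} (ht : t ∈ Set.Icc (0 : ℝ) 1) :
    dist (G.geo x y t) y = (1 - t) * dist x y := by
  have h := G.geo_dist x y t ht 1 ⟨zero_le_one, le_rfl⟩
  rwa [G.geo_one, abs_sub_comm, abs_of_nonneg (sub_nonneg.2 ht.2)] at h

theorem closedBall_add_subset_cthickening (G : Hadamard H) (y : H) {r : ℝ} (s : ℝ) (hr : 0 ≤ r) :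
    Metric.closedBall y (r + s) ⊆ Metric.cthickening s (Metric.closedBall y r) := by
  intro x hx
  rw [Metric.mem_closedBall, dist_comm] at hx
  rcases le_or_gt (dist y x) r with hle | hlt
  · exact Metric.self_subset_cthickening _ (by rwa [Metric.mem_closedBall, dist_comm])
  · have hd : 0 < dist y x := hr.trans_lt hlt
    have ht : r / dist y x ∈ Set.Icc (0 : ℝ) 1 :=
      ⟨div_nonneg hr hd.le, (div_le_one hd).2 hlt.le⟩
    refine Metric.mem_cthickening_of_dist_le x (G.geo y x (r / dist y x)) s _ ?_ ?_
    · rw [Metric.mem_closedBall, dist_comm, G.dist_geo_left y x ht, div_mul_cancel₀ _ hd.ne']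
    · rw [dist_comm, G.dist_geo_right y x ht, sub_mul, one_mul, div_mul_cancel₀ _ hd.ne']
      linarith

theorem exists_isCompact_closedBall_add [LocallyCompactSpace H] (G : Hadamard H) (y : H)
    {r : ℝ} (hr : 0 ≤ r) (hK : IsCompact (Metric.closedBall y r)) :
    ∃ δ > 0, IsCompact (Metric.closedBall y (r + δ)) := by
  obtain ⟨δ, hδ, hcpt⟩ := hK.exists_isCompact_cthickening
  exact ⟨δ, hδ, hcpt.of_isClosed_subset Metric.isClosed_closedBall
    (G.closedBall_add_subset_cthickening y δ hr)⟩

theorem isCompact_closedBall_of_forall_lt [CompleteSpace H] (G : Hadamard H) (y : H) {r : ℝ}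
    (hr : 0 < r) (h : ∀ r' < r, IsCompact (Metric.closedBall y r')) :
    IsCompact (Metric.closedBall y r) := by
  refine isCompact_iff_totallyBounded_isComplete.2
    ⟨Metric.totallyBounded_of_forall_subset_thickening fun ε hε => ?_,
      Metric.isClosed_closedBall.isComplete⟩
  set s := min (ε / 2) r
  have hs : 0 < s := lt_min (half_pos hε) hr
  refine ⟨_, (h (r - s) (sub_lt_self r hs)).totallyBounded, ?_⟩
  calc Metric.closedBall y r = Metric.closedBall y (r - s + s) := by rw [sub_add_cancel]
    _ ⊆ Metric.cthickening s (Metric.closedBall y (r - s)) :=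
      G.closedBall_add_subset_cthickening y s (sub_nonneg.2 (min_le_right _ _))
    _ ⊆ Metric.thickening ε (Metric.closedBall y (r - s)) :=
      Metric.cthickening_subset_thickening' hε
        ((min_le_left _ _).trans_lt (half_lt_self hε)) _

/-- Hopf–Rinow: the radii of the compact closed balls around `y` form a clopen subset of `ℝ`. -/
theorem properSpace [CompleteSpace H] [LocallyCompactSpace H] (G : Hadamard H) :
    ProperSpace H := by
  refine ⟨fun y => ?_⟩
  set S := {r : ℝ | IsCompact (Metric.closedBall y r)}
  have hmono : ∀ r ∈ S, ∀ r' ≤ r, r' ∈ S := fun r hr r' hr' =>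
    hr.of_isClosed_subset Metric.isClosed_closedBall (Metric.closedBall_subset_closedBall hr')
  have hnonpos : ∀ r ≤ 0, r ∈ S := fun r hr =>
    Set.Subsingleton.isCompact fun a ha b hb => dist_le_zero.1 <| by
      rw [Metric.mem_closedBall] at ha hb
      linarith [dist_triangle_right a b y]
  have hopen : IsOpen S := isOpen_iff_mem_nhds.2 fun r hr => by
    rcases lt_or_ge r 0 with hneg | hnn
    · exact Filter.mem_of_superset (Iio_mem_nhds hneg) fun r' h => hnonpos r' (le_of_lt h)
    · obtain ⟨δ, hδ, hcpt⟩ := G.exists_isCompact_closedBall_add y hnn hr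
      exact Filter.mem_of_superset (Iio_mem_nhds (lt_add_of_pos_right r hδ))
        fun r' h => hmono _ hcpt r' (le_of_lt h)
  have hclosed : IsClosed S := isClosed_of_closure_subset fun r hr => by
    rcases le_or_gt r 0 with hnp | hpos
    · exact hnonpos r hnp
    · refine G.isCompact_closedBall_of_forall_lt y hpos fun r' hr' => ?_
      obtain ⟨s, hs, hsS⟩ := mem_closure_iff_nhds.1 hr _ (Ioi_mem_nhds hr')
      exact hmono s hsS r' (le_of_lt hs)
  have hS : S = Set.univ := IsClopen.eq_univ ⟨hclosed, hopen⟩ ⟨0, hnonpos 0 le_rfl⟩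
  exact fun r => Set.eq_univ_iff_forall.1 hS r

end Hadamard

theorem sum_Icc_le_sub_of_le_sub {a u : ℕ → ℝ} {N : ℕ}
    (h : ∀ n ∈ Finset.Icc 1 N, a n ≤ u (n - 1) - u n) :
    ∑ n ∈ Finset.Icc 1 N, a n ≤ u 0 - u N := by
  induction N with
  | zero => simp
  | succ N ih =>
    rw [Finset.sum_Icc_succ_top (Nat.le_add_left 1 N)]
    have hlast := h (N + 1) (Finset.mem_Icc.2 ⟨Nat.le_add_left 1 N, le_rfl⟩)
    have hprev := ih fun n hn => h n (Finset.Icc_subset_Icc_right (Nat.le_succ N) hn)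
    rw [Nat.add_sub_cancel] at hlast
    linarith

theorem summable_of_add_le_add_summable {a d e : ℕ → ℝ} (ha : ∀ k, 0 ≤ a k)
    (hd : ∀ k, 0 ≤ d k) (he : ∀ k, 0 ≤ e k) (he_sum : Summable e)
    (h : ∀ k, a (k + 1) + d k ≤ a k + e k) : Summable d := by
  refine summable_of_sum_range_le (c := a 0 + ∑' k, e k) hd fun m => ?_
  calc ∑ k ∈ Finset.range m, d k ≤ ∑ k ∈ Finset.range m, (a k - a (k + 1) + e k) :=
        Finset.sum_le_sum fun k _ => by linarith [h k]
    _ = a 0 - a m + ∑ k ∈ Finset.range m, e k := by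
      rw [Finset.sum_add_distrib, Finset.sum_range_sub']
    _ ≤ a 0 + ∑' k, e k := by linarith [ha m, he_sum.sum_le_tsum (Finset.range m) fun k _ => he k]

/-- Quasi-Fejér sequences converge: `a k + ∑_{j ≥ k} e j` is antitone and bounded below. -/
theorem exists_tendsto_of_le_add_summable {a e : ℕ → ℝ} (ha : ∀ k, 0 ≤ a k)
    (he : ∀ k, 0 ≤ e k) (he_sum : Summable e) (h : ∀ k, a (k + 1) ≤ a k + e k) :
    ∃ l, Tendsto a atTop (𝓝 l) := by
  set b : ℕ → ℝ := fun k => a k + ∑' j, e (j + k)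
  have hb_anti : Antitone b := antitone_nat_of_succ_le fun k => by
    have htail : ∑' j, e (j + k) = e k + ∑' j, e (j + (k + 1)) := by
      rw [((summable_nat_add_iff k).2 he_sum).tsum_eq_zero_add]
      simp only [zero_add, add_right_comm _ 1 k, add_assoc]
    simp only [b, htail]
    linarith [h k]
  have hb_bdd : BddBelow (Set.range b) :=
    ⟨0, Set.forall_mem_range.2 fun k => add_nonneg (ha k) (tsum_nonneg fun j => he _)⟩
  refine ⟨⨅ k, b k, ?_⟩
  simpa [b] using (tendsto_atTop_ciInf hb_anti hb_bdd).sub (tendsto_sum_nat_add e)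

theorem exists_strictMono_tendsto_zero_of_not_summable {t g : ℕ → ℝ} (ht : ∀ k, 0 ≤ t k)
    (ht_div : ¬ Summable t) (hg : ∀ k, 0 ≤ g k) (htg : Summable fun k => t k * g k) :
    ∃ φ : ℕ → ℕ, StrictMono φ ∧ Tendsto (g ∘ φ) atTop (𝓝 0) := by
  have hfreq : ∀ ε > 0, ∃ᶠ k in atTop, g k < ε := by
    intro ε hε
    by_contra hcon
    simp only [not_frequently, not_lt] at hcon
    refine ht_div ((htg.div_const ε).of_norm_bounded_eventually ?_)
    filter_upwards [Nat.cofinite_eq_atTop ▸ hcon] with k hk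
    rw [Real.norm_of_nonneg (ht k), le_div_iff₀ hε]
    exact mul_le_mul_of_nonneg_left hk (ht k)
  obtain ⟨φ, hφ, hlt⟩ := extraction_forall_of_frequently fun n : ℕ =>
    hfreq (1 / ((n : ℝ) + 1)) Nat.one_div_pos_of_nat
  exact ⟨φ, hφ, squeeze_zero (fun n => hg _) (fun n => (hlt n).le)
    tendsto_one_div_add_atTop_nhds_zero_nat⟩

theorem LowerSemicontinuous.le_of_tendsto {X γ ι : Type*} [TopologicalSpace X] [LinearOrder γ]
    [DenselyOrdered γ] [TopologicalSpace γ] [OrderTopology γ] {F : X → γ}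
    (hF : LowerSemicontinuous F) {l : Filter ι} [l.NeBot] {v : ι → X} {z : X} {c : γ}
    (hv : Tendsto v l (𝓝 z)) (hc : Tendsto (F ∘ v) l (𝓝 c)) : F z ≤ c := by
  by_contra! hlt
  obtain ⟨d, hcd, hdz⟩ := exists_between hlt
  obtain ⟨i, hi_low, hi_up⟩ :=
    ((hv.eventually (hF z d hdz)).and (hc.eventually (gt_mem_nhds hcd))).exists
  exact lt_asymm hi_low hi_up

theorem tendsto_of_dist_sq_le_add_summable {X : Type*} [PseudoMetricSpace X] {u : ℕ → X} {z : X}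
    {e : ℕ → ℝ} (he : ∀ k, 0 ≤ e k) (he_sum : Summable e)
    (h : ∀ k, dist (u (k + 1)) z ^ 2 ≤ dist (u k) z ^ 2 + e k) {φ : ℕ → ℕ} (hφ : StrictMono φ)
    (hsub : Tendsto (u ∘ φ) atTop (𝓝 z)) : Tendsto u atTop (𝓝 z) := by
  obtain ⟨l, hl⟩ := exists_tendsto_of_le_add_summable (a := fun k => dist (u k) z ^ 2)
    (fun k => sq_nonneg _) he he_sum h
  have hsub_sq : Tendsto (fun k => dist (u (φ k)) z ^ 2) atTop (𝓝 0) := by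
    simpa using (tendsto_iff_dist_tendsto_zero.1 hsub).pow 2
  have hl0 : l = 0 := tendsto_nhds_unique (hl.comp hφ.tendsto_atTop) hsub_sq
  rw [hl0] at hl
  refine tendsto_iff_dist_tendsto_zero.2 ?_
  simpa [Real.sqrt_sq dist_nonneg] using hl.sqrt

theorem tendsto_of_tendsto_comp_mul {X : Type*} [PseudoMetricSpace X] {u : ℕ → X} {z : X}
    {N : ℕ} (hN : N ≠ 0) (hu : Tendsto (fun k => u (k * N)) atTop (𝓝 z)) {δ : ℕ → ℝ}
    (hδ : Tendsto δ atTop (𝓝 0)) (hdist : ∀ k r, r < N → dist (u (k * N)) (u (k * N + r)) ≤ δ k) :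
    Tendsto u atTop (𝓝 z) := by
  refine tendsto_iff_dist_tendsto_zero.2 (squeeze_zero (fun _ => dist_nonneg) (fun j => ?_)
    (by simpa using ((hδ.add (tendsto_iff_dist_tendsto_zero.1 hu)).comp
      (Nat.tendsto_div_const_atTop hN))))
  calc dist (u j) z ≤ dist (u (j / N * N)) (u j) + dist (u (j / N * N)) z :=
        dist_triangle_left _ _ _
    _ ≤ δ (j / N) + dist (u (j / N * N)) z := by
      gcongr
      simpa only [Nat.div_add_mod'] using
        hdist (j / N) (j % N) (Nat.mod_lt j (Nat.pos_of_ne_zero hN))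

namespace EReal

theorem ne_top_of_sub_le_coe {a b : EReal} {r : ℝ} (h : a - b ≤ r) (hb : b ≠ ⊤) : a ≠ ⊤ := by
  rintro rfl
  rw [top_sub hb, top_le_iff] at h
  exact coe_ne_top r h

theorem toReal_sub_le_of_sub_le_coe {a b : EReal} {r : ℝ} (h : a - b ≤ r) (ha : a ≠ ⊥)
    (hb : b ≠ ⊤) (hb' : b ≠ ⊥) : a.toReal - b.toReal ≤ r := by
  rw [← coe_toReal (ne_top_of_sub_le_coe h hb) ha, ← coe_toReal hb hb', ← coe_sub] at h
  exact_mod_cast h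

variable {ι : Type*} {s : Finset ι} {f : ι → EReal}

theorem sum_ne_bot (h : ∀ i ∈ s, f i ≠ ⊥) : ∑ i ∈ s, f i ≠ ⊥ :=
  Finset.sum_induction f (· ≠ ⊥) (fun _ _ ha hb => by simp [add_eq_bot_iff, ha, hb])
    zero_ne_bot h

theorem sum_ne_top (h : ∀ i ∈ s, f i ≠ ⊤) : ∑ i ∈ s, f i ≠ ⊤ :=
  Finset.sum_induction f (· ≠ ⊤) (fun _ _ ha hb => add_ne_top ha hb) zero_ne_top h

theorem ne_top_of_sum_ne_top (hbot : ∀ i ∈ s, f i ≠ ⊥) (h : ∑ i ∈ s, f i ≠ ⊤) {i : ι}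
    (hi : i ∈ s) : f i ≠ ⊤ := by
  classical
  intro hfi
  rw [← Finset.add_sum_erase s f hi, hfi,
    top_add_of_ne_bot (sum_ne_bot fun j hj => hbot j (Finset.mem_of_mem_erase hj))] at h
  exact h rfl

theorem toReal_sum (htop : ∀ i ∈ s, f i ≠ ⊤) (hbot : ∀ i ∈ s, f i ≠ ⊥) :
    (∑ i ∈ s, f i).toReal = ∑ i ∈ s, (f i).toReal := by
  classical
  induction s using Finset.induction_on with
  | empty => simp
  | insert a s ha ih =>
    simp only [Finset.mem_insert, forall_eq_or_imp] at htop hbot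
    rw [Finset.sum_insert ha, Finset.sum_insert ha,
      toReal_add htop.1 hbot.1 (sum_ne_top htop.2) (sum_ne_bot hbot.2), ih htop.2 hbot.2]

theorem lowerSemicontinuous_sum {X : Type*} [TopologicalSpace X] {F : ι → X → EReal}
    (hF : ∀ i ∈ s, LowerSemicontinuous (F i)) (hbot : ∀ i ∈ s, ∀ x, F i x ≠ ⊥) :
    LowerSemicontinuous fun x => ∑ i ∈ s, F i x := by
  classical
  induction s using Finset.induction_on with
  | empty => simpa using lowerSemicontinuous_const
  | insert a s ha ih =>
    simp only [Finset.mem_insert, forall_eq_or_imp] at hF hbot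
    simp only [Finset.sum_insert ha]
    exact hF.1.add' (ih hF.2 hbot.2) fun x => continuousAt_add
      (Or.inr (sum_ne_bot fun i hi => hbot.2 i hi x)) (Or.inl (hbot.1 x))

end EReal

section QuasiFejer

variable {X : Type*} [MetricSpace X] {F : X → EReal} {u : ℕ → X} {t e : ℕ → ℝ}

theorem exists_isMin_subseq_tendsto_of_quasiFejer [ProperSpace X] (hF_bot : ∀ w, F w ≠ ⊥)
    (hF : LowerSemicontinuous F) (hmin : ∃ y, ∀ w, F y ≤ F w) (hu : ∀ k, F (u k) ≠ ⊤)
    (ht : ∀ k, 0 ≤ t k) (ht_div : ¬ Summable t) (he : ∀ k, 0 ≤ e k) (he_sum : Summable e)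
    (hfejer : ∀ y, F y ≠ ⊤ → ∀ k,
      dist (u (k + 1)) y ^ 2 + t k * ((F (u k)).toReal - (F y).toReal) ≤ dist (u k) y ^ 2 + e k) :
    ∃ z, (∀ w, F z ≤ F w) ∧ ∃ φ : ℕ → ℕ, StrictMono φ ∧ Tendsto (u ∘ φ) atTop (𝓝 z) := by
  obtain ⟨y, hy⟩ := hmin
  have hy_top : F y ≠ ⊤ := ne_top_of_le_ne_top (hu 0) (hy _)
  set gap : ℕ → ℝ := fun k => (F (u k)).toReal - (F y).toReal
  have hgap : ∀ k, 0 ≤ gap k := fun k =>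
    sub_nonneg.2 (EReal.toReal_le_toReal (hy _) (hF_bot _) (hu k))
  have hfejer_y := hfejer y hy_top
  obtain ⟨φ, hφ, hgapφ⟩ := exists_strictMono_tendsto_zero_of_not_summable ht ht_div hgap
    (summable_of_add_le_add_summable (a := fun k => dist (u k) y ^ 2) (fun _ => sq_nonneg _)
      (fun k => mul_nonneg (ht k) (hgap k)) he he_sum hfejer_y)
  obtain ⟨l, hl⟩ := exists_tendsto_of_le_add_summable (a := fun k => dist (u k) y ^ 2)
    (fun _ => sq_nonneg _) he he_sum fun k => by linarith [hfejer_y k, mul_nonneg (ht k) (hgap k)]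
  obtain ⟨R, hR⟩ := hl.bddAbove_range
  have hbdd : Bornology.IsBounded (Set.range u) :=
    (Metric.isBounded_iff_subset_closedBall y).2
      ⟨√R, Set.range_subset_iff.2 fun k => Real.le_sqrt_of_sq_le (hR ⟨k, rfl⟩)⟩
  obtain ⟨z, -, ψ, hψ, hz⟩ := tendsto_subseq_of_bounded hbdd fun k => Set.mem_range_self (φ k)
  have hFz : F z ≤ F y := by
    refine hF.le_of_tendsto hz ?_
    have hlim : Tendsto (fun i => gap (φ (ψ i)) + (F y).toReal) atTop (𝓝 (F y).toReal) := by
      simpa using (hgapφ.comp hψ.tendsto_atTop).add_const (F y).toReal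
    rw [← EReal.coe_toReal hy_top (hF_bot y)]
    refine (EReal.tendsto_coe.2 hlim).congr fun i => ?_
    simp [gap, EReal.coe_toReal (hu _) (hF_bot _)]
  exact ⟨z, fun w => hFz.trans (hy w), φ ∘ ψ, hφ.comp hψ, hz⟩

theorem exists_isMin_tendsto_of_quasiFejer [ProperSpace X] (hF_bot : ∀ w, F w ≠ ⊥)
    (hF : LowerSemicontinuous F) (hmin : ∃ y, ∀ w, F y ≤ F w) (hu : ∀ k, F (u k) ≠ ⊤)
    (ht : ∀ k, 0 ≤ t k) (ht_div : ¬ Summable t) (he : ∀ k, 0 ≤ e k) (he_sum : Summable e)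
    (hfejer : ∀ y, F y ≠ ⊤ → ∀ k,
      dist (u (k + 1)) y ^ 2 + t k * ((F (u k)).toReal - (F y).toReal) ≤ dist (u k) y ^ 2 + e k) :
    ∃ z, (∀ w, F z ≤ F w) ∧ Tendsto u atTop (𝓝 z) := by
  obtain ⟨z, hz, φ, hφ, hsub⟩ := exists_isMin_subseq_tendsto_of_quasiFejer hF_bot hF hmin hu ht
    ht_div he he_sum hfejer
  have hz_top : F z ≠ ⊤ := ne_top_of_le_ne_top (hu 0) (hz _)
  refine ⟨z, hz, tendsto_of_dist_sq_le_add_summable he he_sum (fun k => ?_) hφ hsub⟩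
  have hgap : 0 ≤ (F (u k)).toReal - (F z).toReal :=
    sub_nonneg.2 (EReal.toReal_le_toReal (hz _) (hF_bot _) (hu k))
  linarith [hfejer z hz_top k, mul_nonneg (ht k) hgap]

end QuasiFejer

def IsProxPoint {H : Type*} [MetricSpace H] (f : H → EReal) (lam : ℝ) (x y : H) : Prop :=
  ∀ z, f y + ((1 / (2 * lam) * dist x y ^ 2 : ℝ) : EReal)
    ≤ f z + ((1 / (2 * lam) * dist x z ^ 2 : ℝ) : EReal)

namespace IsProxPoint

variable {H : Type*} [MetricSpace H] {f : H → EReal} {lam : ℝ} {x y : H}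

theorem ne_top (h : IsProxPoint f lam x y) {w : H} (hw : f w ≠ ⊤) : f y ≠ ⊤ := by
  intro hy
  have hw' := h w
  rw [hy, EReal.top_add_coe, top_le_iff] at hw'
  exact EReal.add_ne_top hw (EReal.coe_ne_top _) hw'

theorem dist_le (h : IsProxPoint f lam x y) (hlam : 0 < lam) {L : ℝ} (hL : 0 ≤ L)
    (hx : f x ≠ ⊥) (hy : f y ≠ ⊤) (hy' : f y ≠ ⊥)
    (hlip : f x - f y ≤ ((L * dist x y : ℝ) : EReal)) :
    dist x y ≤ 2 * L * lam := by
  have hsub := EReal.toReal_sub_le_of_sub_le_coe hlip hx hy hy'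
  have hprox : (f y).toReal + 1 / (2 * lam) * dist x y ^ 2
      ≤ (f x).toReal + 1 / (2 * lam) * dist x x ^ 2 := by
    have hxx := h x
    rw [← EReal.coe_toReal hy hy',
      ← EReal.coe_toReal (EReal.ne_top_of_sub_le_coe hlip hy) hx] at hxx
    exact_mod_cast hxx
  rw [dist_self] at hprox
  have hsq : dist x y ^ 2 ≤ 2 * L * lam * dist x y := by
    have h2lam : 2 * lam * (1 / (2 * lam)) = 1 := mul_one_div_cancel (by positivity)
    nlinarith
  nlinarith [dist_nonneg (x := x) (y := y), mul_nonneg hL hlam.le]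

/-- The variational inequality of the resolvent, obtained by comparing `y` with the points of the
geodesic from `y` to `z` and letting them tend to `y`. -/
theorem prox_inequality (h : IsProxPoint f lam x y) (G : Hadamard H) (hconv : GeoConvex G f)
    (hbot : ∀ w, f w ≠ ⊥) (hlam : 0 < lam) (hy : f y ≠ ⊤) {z : H} (hz : f z ≠ ⊤) :
    2 * lam * ((f y).toReal - (f z).toReal) + dist x y ^ 2 + dist y z ^ 2 ≤ dist x z ^ 2 := by
  set A := (f y).toReal
  set B := (f z).toReal
  set c := 1 / (2 * lam)
  have hA : f y = A := (EReal.coe_toReal hy (hbot y)).symm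
  have hB : f z = B := (EReal.coe_toReal hz (hbot z)).symm
  have hc : 0 < c := by positivity
  have key : ∀ s ∈ Set.Ioc (0 : ℝ) 1,
      (1 - s) * (c * dist y z ^ 2) ≤ B - A + c * dist x z ^ 2 - c * dist x y ^ 2 := by
    intro s hs
    have hs' : s ∈ Set.Icc (0 : ℝ) 1 := Set.Ioc_subset_Icc_self hs
    set w := G.geo y z s
    have hconv_w : f w ≤ (((1 - s) * A + s * B : ℝ) : EReal) := by
      have := hconv y z s hs'
      rw [hA, hB] at this
      exact_mod_cast this
    have hw : f w = (f w).toReal :=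
      (EReal.coe_toReal (ne_top_of_le_ne_top (EReal.coe_ne_top _) hconv_w) (hbot w)).symm
    have hconv_w' : (f w).toReal ≤ (1 - s) * A + s * B := by
      rw [hw] at hconv_w
      exact_mod_cast hconv_w
    have hprox : A + c * dist x y ^ 2 ≤ (f w).toReal + c * dist x w ^ 2 := by
      have := h w
      rw [hA, hw] at this
      exact_mod_cast this
    have hcat := G.cat0 x y z s hs'
    have hs_pos : 0 < s := hs.1
    nlinarith [mul_le_mul_of_nonneg_left hcat hc.le]
  have hlim : Tendsto (fun s => (1 - s) * (c * dist y z ^ 2)) (𝓝[>] 0) (𝓝 (c * dist y z ^ 2)) := by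
    have : Continuous fun s : ℝ => (1 - s) * (c * dist y z ^ 2) := by fun_prop
    simpa using (this.tendsto 0).mono_left nhdsWithin_le_nhds
  have hle := le_of_tendsto hlim (Filter.mem_of_superset (Ioc_mem_nhdsGT one_pos) key)
  have h2lam : 2 * lam * c = 1 := mul_one_div_cancel (by positivity)
  nlinarith [mul_le_mul_of_nonneg_left hle (by positivity : (0 : ℝ) ≤ 2 * lam)]

end IsProxPoint

/-- `p 0, …, p N` is one sweep of the cyclic algorithm with step `lam`; `L` is the constant of the
growth bounds assumed in the theorem. -/
structure IsProxCycle {H : Type*} [MetricSpace H] (fs : ℕ → H → EReal) (N : ℕ) (lam L : ℝ)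
    (p : ℕ → H) : Prop where
  prox : ∀ n ∈ Finset.Icc 1 N, IsProxPoint (fs n) lam (p (n - 1)) (p n)
  sub_le_start : ∀ n ∈ Finset.Icc 1 N,
    fs n (p 0) - fs n (p n) ≤ ((L * dist (p 0) (p n) : ℝ) : EReal)
  sub_le_prev : ∀ n ∈ Finset.Icc 1 N,
    fs n (p (n - 1)) - fs n (p n) ≤ ((L * dist (p (n - 1)) (p n) : ℝ) : EReal)

namespace IsProxCycle

variable {H : Type*} [MetricSpace H] {fs : ℕ → H → EReal} {N : ℕ} {lam L : ℝ} {p : ℕ → H}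

theorem ne_top (hc : IsProxCycle fs N lam L p) (hproper : ∀ n ∈ Finset.Icc 1 N, ∃ w, fs n w ≠ ⊤)
    {n : ℕ} (hn : n ∈ Finset.Icc 1 N) : fs n (p n) ≠ ⊤ :=
  let ⟨_, hw⟩ := hproper n hn
  (hc.prox n hn).ne_top hw

theorem ne_top_start (hc : IsProxCycle fs N lam L p)
    (hproper : ∀ n ∈ Finset.Icc 1 N, ∃ w, fs n w ≠ ⊤) {n : ℕ} (hn : n ∈ Finset.Icc 1 N) :
    fs n (p 0) ≠ ⊤ :=
  EReal.ne_top_of_sub_le_coe (hc.sub_le_start n hn) (hc.ne_top hproper hn)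

theorem dist_succ_le (hc : IsProxCycle fs N lam L p) (hbot : ∀ n ∈ Finset.Icc 1 N, ∀ w, fs n w ≠ ⊥)
    (hproper : ∀ n ∈ Finset.Icc 1 N, ∃ w, fs n w ≠ ⊤) (hlam : 0 < lam) (hL : 0 ≤ L) {i : ℕ}
    (hi : i < N) : dist (p i) (p (i + 1)) ≤ 2 * L * lam := by
  have hn : i + 1 ∈ Finset.Icc 1 N := Finset.mem_Icc.2 ⟨Nat.le_add_left 1 i, hi⟩
  simpa using (hc.prox _ hn).dist_le hlam hL (hbot _ hn _) (hc.ne_top hproper hn) (hbot _ hn _)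
    (hc.sub_le_prev _ hn)

theorem dist_start_le (hc : IsProxCycle fs N lam L p)
    (hbot : ∀ n ∈ Finset.Icc 1 N, ∀ w, fs n w ≠ ⊥) (hproper : ∀ n ∈ Finset.Icc 1 N, ∃ w, fs n w ≠ ⊤)
    (hlam : 0 < lam) (hL : 0 ≤ L) {r : ℕ} (hr : r ≤ N) :
    dist (p 0) (p r) ≤ r * (2 * L * lam) :=
  calc dist (p 0) (p r) ≤ ∑ i ∈ Finset.range r, dist (p i) (p (i + 1)) := dist_le_range_sum_dist p r
    _ ≤ (Finset.range r).card • (2 * L * lam) := Finset.sum_le_card_nsmul _ _ _ fun i hi =>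
      hc.dist_succ_le hbot hproper hlam hL ((Finset.mem_range.1 hi).trans_le hr)
    _ = r * (2 * L * lam) := by simp

theorem toReal_start_sub_le (hc : IsProxCycle fs N lam L p)
    (hbot : ∀ n ∈ Finset.Icc 1 N, ∀ w, fs n w ≠ ⊥) (hproper : ∀ n ∈ Finset.Icc 1 N, ∃ w, fs n w ≠ ⊤)
    (hlam : 0 < lam) (hL : 0 ≤ L) {n : ℕ} (hn : n ∈ Finset.Icc 1 N) :
    (fs n (p 0)).toReal - (fs n (p n)).toReal ≤ 2 * L ^ 2 * N * lam := by
  have hsub := EReal.toReal_sub_le_of_sub_le_coe (hc.sub_le_start n hn) (hbot n hn _)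
    (hc.ne_top hproper hn) (hbot n hn _)
  have hnN : (n : ℝ) ≤ N := by exact_mod_cast (Finset.mem_Icc.1 hn).2
  have hdist : L * dist (p 0) (p n) ≤ L * (N * (2 * L * lam)) :=
    mul_le_mul_of_nonneg_left ((hc.dist_start_le hbot hproper hlam hL (Finset.mem_Icc.1 hn).2).trans
      (mul_le_mul_of_nonneg_right hnN (by positivity))) hL
  linarith

/-- The resolvent inequalities of a sweep telescope. -/
theorem dist_sq_add_le (hc : IsProxCycle fs N lam L p) (G : Hadamard H)
    (hbot : ∀ n ∈ Finset.Icc 1 N, ∀ w, fs n w ≠ ⊥)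
    (hconv : ∀ n ∈ Finset.Icc 1 N, GeoConvex G (fs n))
    (hproper : ∀ n ∈ Finset.Icc 1 N, ∃ w, fs n w ≠ ⊤) (hlam : 0 < lam) (hL : 0 ≤ L) {y : H}
    (hy : ∑ n ∈ Finset.Icc 1 N, fs n y ≠ ⊤) :
    dist (p N) y ^ 2 + 2 * lam * ((∑ n ∈ Finset.Icc 1 N, fs n (p 0)).toReal
        - (∑ n ∈ Finset.Icc 1 N, fs n y).toReal)
      ≤ dist (p 0) y ^ 2 + 4 * L ^ 2 * N ^ 2 * lam ^ 2 := by
  have hy' : ∀ n ∈ Finset.Icc 1 N, fs n y ≠ ⊤ := fun n hn =>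
    EReal.ne_top_of_sum_ne_top (fun m hm => hbot m hm y) hy hn
  rw [EReal.toReal_sum (fun n hn => hc.ne_top_start hproper hn) (fun n hn => hbot n hn _),
    EReal.toReal_sum hy' (fun n hn => hbot n hn y), ← Finset.sum_sub_distrib]
  have htel : ∑ n ∈ Finset.Icc 1 N, 2 * lam * ((fs n (p n)).toReal - (fs n y).toReal)
      ≤ dist (p 0) y ^ 2 - dist (p N) y ^ 2 :=
    sum_Icc_le_sub_of_le_sub (u := fun n => dist (p n) y ^ 2) fun n hn => by
      linarith [(hc.prox n hn).prox_inequality G (hconv n hn) (hbot n hn) hlam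
        (hc.ne_top hproper hn) (hy' n hn), sq_nonneg (dist (p (n - 1)) (p n))]
  calc dist (p N) y ^ 2 + 2 * lam * ∑ n ∈ Finset.Icc 1 N, ((fs n (p 0)).toReal - (fs n y).toReal)
      ≤ dist (p N) y ^ 2 + 2 * lam * ∑ n ∈ Finset.Icc 1 N,
          ((fs n (p n)).toReal - (fs n y).toReal + 2 * L ^ 2 * N * lam) := by
        gcongr with n hn
        linarith [hc.toReal_start_sub_le hbot hproper hlam hL hn]
    _ = dist (p N) y ^ 2 + ∑ n ∈ Finset.Icc 1 N, 2 * lam * ((fs n (p n)).toReal - (fs n y).toReal)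
          + 4 * L ^ 2 * N ^ 2 * lam ^ 2 := by
        rw [Finset.sum_add_distrib, Finset.sum_const, Nat.card_Icc, Nat.add_sub_cancel,
          nsmul_eq_mul, mul_add, Finset.mul_sum]
        ring
    _ ≤ dist (p 0) y ^ 2 + 4 * L ^ 2 * N ^ 2 * lam ^ 2 := by linarith

end IsProxCycle

/-- Cyclic order version of the splitting proximal point algorithm: the sequence
`(x j)` produced by cyclically applying the resolvents of the components
`f₁, …, f_N` converges to a minimizer of `f = ∑ₙ fₙ`. -/
theorem cyclic_splitting_ppa_converges
    {H : Type*} [MetricSpace H] [CompleteSpace H] [LocallyCompactSpace H]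
    (G : Hadamard H)
    (N : ℕ) (hN : 1 ≤ N)
    (fs : ℕ → H → EReal)
    (hfs_ne_bot : ∀ n ∈ Finset.Icc 1 N, ∀ x : H, fs n x ≠ ⊥)
    (hfs_proper : ∀ n ∈ Finset.Icc 1 N, ∃ x : H, fs n x ≠ ⊤)
    (hfs_conv : ∀ n ∈ Finset.Icc 1 N, GeoConvex G (fs n))
    (hfs_lsc : ∀ n ∈ Finset.Icc 1 N, LowerSemicontinuous (fs n))
    (hmin_ne : ∃ z : H, ∀ y : H,
      (∑ n ∈ Finset.Icc 1 N, fs n z) ≤ ∑ n ∈ Finset.Icc 1 N, fs n y)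
    (lam : ℕ → ℝ) (hlam_pos : ∀ k, 0 < lam k)
    (hlam_div : ¬ Summable lam) (hlam_sq : Summable fun k => lam k ^ 2)
    (x : ℕ → H)
    (hstep : ∀ k : ℕ, ∀ n ∈ Finset.Icc 1 N, ∀ z : H,
      fs n (x (k * N + n))
          + ((1 / (2 * lam k) * dist (x (k * N + n - 1)) (x (k * N + n)) ^ 2 : ℝ) : EReal)
        ≤ fs n z + ((1 / (2 * lam k) * dist (x (k * N + n - 1)) z ^ 2 : ℝ) : EReal))
    (L : ℝ) (hL : 0 < L)
    (hlip₀ : ∀ k : ℕ, ∀ n ∈ Finset.Icc 1 N,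
      fs n (x (k * N)) - fs n (x (k * N + n))
        ≤ ((L * dist (x (k * N)) (x (k * N + n)) : ℝ) : EReal))
    (hlip₁ : ∀ k : ℕ, ∀ n ∈ Finset.Icc 1 N,
      fs n (x (k * N + n - 1)) - fs n (x (k * N + n))
        ≤ ((L * dist (x (k * N + n - 1)) (x (k * N + n)) : ℝ) : EReal)) :
    ∃ z : H,
      (∀ y : H, (∑ n ∈ Finset.Icc 1 N, fs n z) ≤ ∑ n ∈ Finset.Icc 1 N, fs n y) ∧
        Tendsto x atTop (𝓝 z) := by
  have := G.properSpace
  have hcyc : ∀ k, IsProxCycle fs N (lam k) L (fun m => x (k * N + m)) := fun k => by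
    have hidx : ∀ n ∈ Finset.Icc 1 N, k * N + (n - 1) = k * N + n - 1 := fun n hn =>
      (Nat.add_sub_assoc (Finset.mem_Icc.1 hn).1 _).symm
    refine ⟨fun n hn => ?_, fun n hn => by simpa using hlip₀ k n hn, fun n hn => ?_⟩
    · simp only [hidx n hn]
      exact hstep k n hn
    · simpa only [hidx n hn] using hlip₁ k n hn
  have hlam_lim : Tendsto lam atTop (𝓝 0) := by
    simpa [Real.sqrt_sq (hlam_pos _).le] using hlam_sq.tendsto_atTop_zero.sqrt
  obtain ⟨z, hz, hlim⟩ := exists_isMin_tendsto_of_quasiFejer (u := fun k => x (k * N))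
    (t := fun k => 2 * lam k) (e := fun k => 4 * L ^ 2 * N ^ 2 * lam k ^ 2)
    (fun w => EReal.sum_ne_bot fun n hn => hfs_ne_bot n hn w)
    (EReal.lowerSemicontinuous_sum hfs_lsc hfs_ne_bot) hmin_ne
    (fun k => EReal.sum_ne_top fun n hn => (hcyc k).ne_top_start hfs_proper hn)
    (fun k => by linarith [hlam_pos k]) (by rwa [summable_mul_left_iff two_ne_zero])
    (fun k => by positivity) (hlam_sq.mul_left _) fun y hy k => by
      simpa only [add_one_mul, add_zero] using
        (hcyc k).dist_sq_add_le G hfs_ne_bot hfs_conv hfs_proper (hlam_pos k) hL.le hy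
  refine ⟨z, hz, tendsto_of_tendsto_comp_mul (Nat.one_le_iff_ne_zero.1 hN) hlim
    (δ := fun k => N * (2 * L * lam k)) ?_ fun k r hr => ?_⟩
  · simpa using (hlam_lim.const_mul (2 * L)).const_mul (N : ℝ)
  · refine ((hcyc k).dist_start_le hfs_ne_bot hfs_proper (hlam_pos k) hL.le hr.le).trans ?_
    have := hlam_pos k
    gcongr
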